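/- The function f is continuous on (−∞, −μ), f(x) → −∞ as x → −∞, and f(x) → +∞ as x → −μ from the left. Consequently there exists a collinear equilibrium point x₃ ∈ (−∞, −μ) with f(x₃) = 0. -/

import Mathlib

/-- Collinear equilibrium function of the generalized photogravitational
Chermnykh problem. -/
noncomputable def fcol (μ q₁ A₂ Mb T n x : ℝ) : ℝ :=
  n ^ 2 * x
    - (1 - μ) * q₁ * (x + μ) / |x + μ| ^ 3
    - μ * (x + μ - 1) / |x + μ - 1| ^ 3
    - (3 / 2) * μ * A₂ * (x + μ - 1) / |x + μ - 1| ^ 5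
    - Mb * x / (x ^ 2 + T ^ 2) ^ ((3 : ℝ) / 2)

/-!
Every term of `f` other than `n²x` and the attraction `-(1-μ)q₁ (x+μ)/|x+μ|³` of the first
primary is continuous at `-μ` and tends to `0` at `-∞`. For `x < -μ` that attraction equals
`(1-μ)q₁/(x+μ)²`, which blows up as `x → -μ⁻`, while `n²x → -∞`. Hence `f` runs from `-∞` to
`+∞` on `(-∞, -μ)` and the intermediate value theorem yields a zero.
-/

open Filter Set Topology

theorem ContinuousOn.exists_mem_Iio_eq_of_tendsto {α δ : Type*} [ConditionallyCompleteLinearOrder α]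
    [TopologicalSpace α] [OrderTopology α] [DenselyOrdered α] [NoMinOrder α] [LinearOrder δ]
    [TopologicalSpace δ] [OrderClosedTopology δ] {f : α → δ} {b : α}
    (hf : ContinuousOn f (Iio b)) (hbot : Tendsto f atBot atBot)
    (htop : Tendsto f (𝓝[<] b) atTop) (y : δ) : ∃ x ∈ Iio b, f x = y := by
  obtain ⟨a, hay, hab⟩ :=
    ((hbot.eventually (eventually_le_atBot y)).and (eventually_lt_atBot b)).exists
  obtain ⟨c, hyc, hcb⟩ := ((htop.eventually (eventually_ge_atTop y)).and self_mem_nhdsWithin).exists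
  exact hf.surjOn_Icc hab hcb ⟨hay, hyc⟩

lemma abs_div_abs_pow_succ_le (u : ℝ) (m : ℕ) : |u / |u| ^ (m + 1)| ≤ (|u| ^ m)⁻¹ := by
  rcases eq_or_ne u 0 with rfl | hu
  · simp
  · rw [abs_div, abs_pow, abs_abs, pow_succ, div_mul_cancel_right₀ (abs_ne_zero.2 hu)]

section InverseSquareLaw

variable (c : ℝ) {m : ℕ}

lemma continuousAt_mul_div_abs_pow (k : ℕ) {u : ℝ} (hu : u ≠ 0) :
    ContinuousAt (fun u => c * u / |u| ^ k) u :=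
  ContinuousAt.div (by fun_prop) (by fun_prop) (pow_ne_zero _ (abs_ne_zero.2 hu))

lemma tendsto_mul_div_abs_pow_atBot (hm : m ≠ 0) :
    Tendsto (fun u => c * u / |u| ^ (m + 1)) atBot (𝓝 0) := by
  have hinv : Tendsto (fun u : ℝ => |c| * (|u| ^ m)⁻¹) atBot (𝓝 0) := by
    simpa using (tendsto_inv_atTop_zero.comp
      ((tendsto_pow_atTop hm).comp tendsto_abs_atBot_atTop)).const_mul |c|
  refine squeeze_zero_norm (fun u => ?_) hinv
  rw [mul_div_assoc, norm_mul, Real.norm_eq_abs, Real.norm_eq_abs]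
  exact mul_le_mul_of_nonneg_left (abs_div_abs_pow_succ_le u m) (abs_nonneg c)

lemma tendsto_mul_div_abs_pow_nhdsLT (hm : m ≠ 0) (hc : 0 < c) :
    Tendsto (fun u => c * u / |u| ^ (m + 1)) (𝓝[<] 0) atBot := by
  have hpow : Tendsto (fun u : ℝ => |u| ^ m) (𝓝[<] 0) (𝓝[>] 0) := by
    refine tendsto_nhdsWithin_iff.2 ⟨?_, ?_⟩
    · have : Tendsto (fun u : ℝ => |u| ^ m) (𝓝 0) (𝓝 0) :=
        (by fun_prop : Continuous fun u : ℝ => |u| ^ m).tendsto' 0 0 (by simp [hm])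
      exact this.mono_left nhdsWithin_le_nhds
    · filter_upwards [self_mem_nhdsWithin] with u (hu : u < 0)
      exact pow_pos (abs_pos.2 hu.ne) m
  refine (tendsto_neg_atTop_atBot.comp
    ((tendsto_inv_nhdsGT_zero.comp hpow).const_mul_atTop hc)).congr' ?_
  filter_upwards [self_mem_nhdsWithin] with u (hu : u < 0)
  have hne : |u| ≠ 0 := abs_ne_zero.2 hu.ne
  rw [Function.comp_apply, Function.comp_apply, abs_of_neg hu]
  field_simp [neg_ne_zero.2 hu.ne]
  ring

end InverseSquareLaw

section BeltTerm

variable (b T : ℝ)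

lemma abs_pow_three_le_rpow (x : ℝ) : |x| ^ 3 ≤ (x ^ 2 + T ^ 2) ^ ((3 : ℝ) / 2) := by
  have hx : |x| ^ 3 = (x ^ 2) ^ ((3 : ℝ) / 2) := by
    rw [← sq_abs, ← Real.rpow_natCast |x| 2, ← Real.rpow_mul (abs_nonneg x),
      ← Real.rpow_natCast |x| 3]
    norm_num
  rw [hx]
  exact Real.rpow_le_rpow (sq_nonneg x) (le_add_of_nonneg_right (sq_nonneg T)) (by norm_num)

lemma continuousAt_mul_div_rpow {x : ℝ} (hx : x ≠ 0) :
    ContinuousAt (fun x => b * x / (x ^ 2 + T ^ 2) ^ ((3 : ℝ) / 2)) x :=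
  ContinuousAt.div (by fun_prop) ((by fun_prop : ContinuousAt (fun x => x ^ 2 + T ^ 2) x).rpow_const
    (Or.inr (by norm_num))) (Real.rpow_pos_of_pos (by positivity) _).ne'

lemma tendsto_mul_div_rpow_atBot :
    Tendsto (fun x => b * x / (x ^ 2 + T ^ 2) ^ ((3 : ℝ) / 2)) atBot (𝓝 0) := by
  refine squeeze_zero_norm' ?_ (by simpa using (tendsto_mul_div_abs_pow_atBot b two_ne_zero).norm)
  filter_upwards [eventually_lt_atBot 0] with x hx
  rw [Real.norm_eq_abs, abs_div, ← abs_mul]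
  exact div_le_div_of_nonneg_left (abs_nonneg _) (pow_pos (abs_pos.2 hx.ne) 3)
    ((abs_pow_three_le_rpow T x).trans (le_abs_self _))

end BeltTerm

section Chermnykh

variable (μ q₁ A₂ Mb T n : ℝ)

/-- `fcol` without the attraction of the first primary, the only term that is singular at `-μ`. -/
noncomputable def fcolRest (x : ℝ) : ℝ :=
  n ^ 2 * x
    - μ * (x + μ - 1) / |x + μ - 1| ^ 3
    - (3 / 2) * μ * A₂ * (x + μ - 1) / |x + μ - 1| ^ 5
    - Mb * x / (x ^ 2 + T ^ 2) ^ ((3 : ℝ) / 2)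

lemma continuousAt_fcolRest {x : ℝ} (h₂ : x + μ - 1 ≠ 0) (hx : x ≠ 0) :
    ContinuousAt (fcolRest μ A₂ Mb T n) x := by
  have hshift : ContinuousAt (fun x : ℝ => x + μ - 1) x := by fun_prop
  exact (((continuousAt_const.mul continuousAt_id).sub
    ((continuousAt_mul_div_abs_pow μ 3 h₂).comp (x := x) hshift)).sub
    ((continuousAt_mul_div_abs_pow (3 / 2 * μ * A₂) 5 h₂).comp (x := x) hshift)).sub
    (continuousAt_mul_div_rpow Mb T (x := x) hx)

lemma tendsto_fcolRest_atBot (hn : n ≠ 0) : Tendsto (fcolRest μ A₂ Mb T n) atBot atBot := by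
  have hshift : Tendsto (fun x : ℝ => x + μ - 1) atBot atBot :=
    tendsto_atBot_atBot.2 fun b => ⟨b - μ + 1, fun x hx => by linarith⟩
  have hdecay : Tendsto (fun x => -(μ * (x + μ - 1) / |x + μ - 1| ^ 3)
      - 3 / 2 * μ * A₂ * (x + μ - 1) / |x + μ - 1| ^ 5
      - Mb * x / (x ^ 2 + T ^ 2) ^ ((3 : ℝ) / 2)) atBot (𝓝 0) := by
    simpa using (((tendsto_mul_div_abs_pow_atBot μ two_ne_zero).comp hshift).neg.sub
      ((tendsto_mul_div_abs_pow_atBot (3 / 2 * μ * A₂) (by norm_num : 4 ≠ 0)).comp hshift)).sub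
      (tendsto_mul_div_rpow_atBot Mb T)
  refine ((tendsto_id.const_mul_atBot (sq_pos_of_ne_zero hn)).atBot_add hdecay).congr
    fun x => ?_
  simp only [fcolRest, id]
  ring

lemma fcol_eq_fcolRest_sub :
    fcol μ q₁ A₂ Mb T n =
      fun x => fcolRest μ A₂ Mb T n x - (1 - μ) * q₁ * (x + μ) / |x + μ| ^ 3 := by
  funext x
  unfold fcol fcolRest
  ring

lemma continuousOn_fcol (hμ : 0 < μ) : ContinuousOn (fcol μ q₁ A₂ Mb T n) (Iio (-μ)) := by
  intro x (hx : x < -μ)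
  have hrest : ContinuousAt (fcolRest μ A₂ Mb T n) x :=
    continuousAt_fcolRest μ A₂ Mb T n (by linarith : x + μ - 1 < 0).ne (by linarith : x < 0).ne
  have hsingular : ContinuousAt (fun x => (1 - μ) * q₁ * (x + μ) / |x + μ| ^ 3) x :=
    (continuousAt_mul_div_abs_pow _ 3 (by linarith : x + μ < 0).ne).comp (x := x)
      (f := fun x => x + μ) (by fun_prop)
  rw [fcol_eq_fcolRest_sub]
  exact (hrest.sub hsingular).continuousWithinAt

lemma tendsto_fcol_atBot (hn : n ≠ 0) : Tendsto (fcol μ q₁ A₂ Mb T n) atBot atBot := by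
  have hshift : Tendsto (fun x : ℝ => x + μ) atBot atBot :=
    tendsto_atBot_add_const_right _ μ tendsto_id
  rw [fcol_eq_fcolRest_sub]
  simpa [sub_eq_add_neg] using (tendsto_fcolRest_atBot μ A₂ Mb T n hn).atBot_add
    ((tendsto_mul_div_abs_pow_atBot ((1 - μ) * q₁) two_ne_zero).comp hshift).neg

lemma tendsto_fcol_nhdsLT (hμ₀ : 0 < μ) (hμ₁ : μ < 1) (hq : 0 < q₁) :
    Tendsto (fcol μ q₁ A₂ Mb T n) (𝓝[<] (-μ)) atTop := by
  have hshift : Tendsto (fun x : ℝ => x + μ) (𝓝[<] (-μ)) (𝓝[<] 0) := by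
    refine tendsto_nhdsWithin_iff.2 ⟨?_, ?_⟩
    · exact ((continuous_add_const μ).tendsto' (-μ) 0 (neg_add_cancel μ)).mono_left
        nhdsWithin_le_nhds
    · filter_upwards [self_mem_nhdsWithin] with x (hx : x < -μ)
      exact show x + μ < 0 by linarith
  have hsingular := tendsto_neg_atBot_atTop.comp ((tendsto_mul_div_abs_pow_nhdsLT ((1 - μ) * q₁)
    two_ne_zero (mul_pos (sub_pos.2 hμ₁) hq)).comp hshift)
  have hrest := (continuousAt_fcolRest μ A₂ Mb T n (x := -μ) (by norm_num)
    (neg_ne_zero.2 hμ₀.ne')).continuousWithinAt (s := Iio (-μ)) |>.tendsto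
  rw [fcol_eq_fcolRest_sub]
  simpa [sub_eq_add_neg] using hrest.add_atTop hsingular

end Chermnykh

theorem collinear_point_left_general
    (μ q₁ A₂ Mb T n : ℝ)
    (hμ0 : 0 < μ) (hμ1 : μ < 1 / 2) (hq0 : 0 < q₁)
    (hn : 0 < n) :
    ContinuousOn (fcol μ q₁ A₂ Mb T n) (Set.Iio (-μ)) ∧
    Filter.Tendsto (fcol μ q₁ A₂ Mb T n) Filter.atBot Filter.atBot ∧
    Filter.Tendsto (fcol μ q₁ A₂ Mb T n) (nhdsWithin (-μ) (Set.Iio (-μ))) Filter.atTop ∧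
    ∃ x₃ ∈ Set.Iio (-μ), fcol μ q₁ A₂ Mb T n x₃ = 0 := by
  have hcont := continuousOn_fcol μ q₁ A₂ Mb T n hμ0
  have hbot := tendsto_fcol_atBot μ q₁ A₂ Mb T n hn.ne'
  have htop := tendsto_fcol_nhdsLT μ q₁ A₂ Mb T n hμ0 (by linarith) hq0
  exact ⟨hcont, hbot, htop, hcont.exists_mem_Iio_eq_of_tendsto hbot htop 0⟩

/-- On `(-∞, -μ)` the function `f` is continuous, tends to `-∞` at `-∞` and to `+∞`
as `x → -μ⁻`; consequently there is a collinear equilibrium point `x₃ < -μ`. -/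
theorem collinear_point_left
    (μ q₁ A₂ Mb T n : ℝ)
    (hμ0 : 0 < μ) (hμ1 : μ < 1 / 2) (hq0 : 0 < q₁) (hq1 : q₁ ≤ 1)
    (hA : 0 ≤ A₂) (hM : 0 ≤ Mb) (hT : 0 < T) (hn : 0 < n) :
    ContinuousOn (fcol μ q₁ A₂ Mb T n) (Set.Iio (-μ)) ∧
    Filter.Tendsto (fcol μ q₁ A₂ Mb T n) Filter.atBot Filter.atBot ∧
    Filter.Tendsto (fcol μ q₁ A₂ Mb T n) (nhdsWithin (-μ) (Set.Iio (-μ))) Filter.atTop ∧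
    ∃ x₃ ∈ Set.Iio (-μ), fcol μ q₁ A₂ Mb T n x₃ = 0 :=
  collinear_point_left_general μ q₁ A₂ Mb T n hμ0 hμ1 hq0 hn
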